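/- arXiv:2404.07189 — 7 statements merged into one kernel-verified Lean document; each statement's English description precedes it below -/
import Mathlib

section
/- Let R be a finite ring with identity in which 2 is not a unit. A subset A of R is a maximal independent set of the unit graph of R if and only if the image of A in R/J(R) is a maximal independent set of the unit graph of R/J(R) and A = A + J(R). -/
open Pointwise

/-- The unit graph of a ring: distinct `x, y` adjacent iff `x + y` is a unit. -/
def unitGraph (R : Type*) [Ring R] : SimpleGraph R where
  Adj x y := x ≠ y ∧ IsUnit (x + y)
  symm := by
    constructor
    rintro x y ⟨h1, h2⟩
    exact ⟨h1.symm, by rwa [add_comm]⟩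
  loopless := by constructor; rintro x ⟨h, _⟩; exact h rfl

/-- The unitary Cayley graph of a ring: distinct `x, y` adjacent iff `x - y` is a unit. -/
def cayleyGraph (R : Type*) [Ring R] : SimpleGraph R where
  Adj x y := x ≠ y ∧ IsUnit (x - y)
  symm := by
    constructor
    rintro x y ⟨h1, h2⟩
    refine ⟨h1.symm, ?_⟩
    rw [← neg_sub]
    exact h2.neg
  loopless := by constructor; rintro x ⟨h, _⟩; exact h rfl

/-- A set of vertices is independent if no two of its elements are adjacent. -/
def IsIndepSet {V : Type*} (G : SimpleGraph V) (A : Set V) : Prop :=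
  ∀ ⦃x⦄, x ∈ A → ∀ ⦃y⦄, y ∈ A → ¬ G.Adj x y

/-- A maximal independent set. -/
def IsMaxIndepSet {V : Type*} (G : SimpleGraph V) (A : Set V) : Prop :=
  IsIndepSet G A ∧ ∀ B, IsIndepSet G B → A ⊆ B → A = B

/-- A graph is well-covered if all maximal independent sets have the same cardinality. -/
def WellCovered {V : Type*} (G : SimpleGraph V) : Prop :=
  ∀ A B : Set V, IsMaxIndepSet G A → IsMaxIndepSet G B → A.ncard = B.ncard

/-!
Since `π` is surjective with kernel inside the Jacobson radical, an element of `R` is a unit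
exactly when its image is. Hence `x + y` is a unit iff `π x + π y` is, and `π x = π y` forces
`x ≠ y` to be non-adjacent, for otherwise `2 * y ≡ x + y` would be a unit and so would `2`.
So `G'(R)` is the pullback of `G'(S)` along `π`, and for a pullback along a surjection the
maximal independent sets are the preimages of the maximal independent sets downstairs;
the saturated sets `π ⁻¹' (π '' A)` are exactly the sets with `A = A + J(R)`.
-/

theorem Ideal.isUnit_of_sub_one_mem_jacobson_bot' {R : Type*} [Ring R] {r : R}
    (h : r - 1 ∈ Ideal.jacobson (⊥ : Ideal R)) : IsUnit r := by
  obtain ⟨s, hs⟩ := Ideal.exists_mul_sub_mem_of_sub_one_mem_jacobson r h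
  rw [Ideal.mem_bot, sub_eq_zero] at hs
  -- the left inverse `s` is itself `≡ 1` modulo the radical, so it has a left inverse too
  have hs' : s - 1 ∈ Ideal.jacobson (⊥ : Ideal R) := by
    have : s - 1 = -(s * (r - 1)) := by rw [mul_sub, mul_one, hs]; abel
    exact this ▸ neg_mem (Ideal.mul_mem_left _ s h)
  obtain ⟨t, ht⟩ := Ideal.exists_mul_sub_mem_of_sub_one_mem_jacobson s hs'
  rw [Ideal.mem_bot, sub_eq_zero] at ht
  exact isUnit_iff_exists.mpr ⟨s, left_inv_eq_right_inv ht hs ▸ ht, hs⟩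

theorem RingHom.isLocalHom_of_surjective_of_ker_le_jacobson_bot {R S : Type*} [Ring R] [Ring S]
    (π : R →+* S) (hsurj : Function.Surjective π)
    (hker : RingHom.ker π ≤ Ideal.jacobson (⊥ : Ideal R)) : IsLocalHom π := by
  refine ⟨fun x ⟨u, hu⟩ => ?_⟩
  obtain ⟨y, hy⟩ := hsurj ↑u⁻¹
  have hxy : IsUnit (x * y) := Ideal.isUnit_of_sub_one_mem_jacobson_bot' <| hker <| by
    simp [RingHom.mem_ker, hy, ← hu]
  have hyx : IsUnit (y * x) := Ideal.isUnit_of_sub_one_mem_jacobson_bot' <| hker <| by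
    simp [RingHom.mem_ker, hy, ← hu]
  obtain ⟨v, hv⟩ := hxy
  obtain ⟨w, hw⟩ := hyx
  refine isUnit_iff_exists_and_exists.mpr ⟨⟨y * ↑v⁻¹, ?_⟩, ⟨↑w⁻¹ * y, ?_⟩⟩
  · rw [← mul_assoc, ← hv, Units.mul_inv]
  · rw [mul_assoc, ← hw, Units.inv_mul]

theorem unitGraph_eq_comap {R S : Type*} [Ring R] [Ring S] (π : R →+* S) [IsLocalHom π]
    (h2 : ¬IsUnit (2 : R)) : unitGraph R = (unitGraph S).comap π := by
  ext x y
  simp only [unitGraph, SimpleGraph.comap_adj, ← map_add, isUnit_map_iff]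
  refine ⟨fun ⟨_, hu⟩ => ⟨fun heq => h2 ?_, hu⟩,
    fun ⟨hne, hu⟩ => ⟨fun h => hne (h ▸ rfl), hu⟩⟩
  have hπ : π (2 * y) = π (x + y) := by rw [map_mul, map_ofNat, two_mul, map_add, heq]
  have h2y : IsUnit (2 * y) := IsUnit.of_map π _ (hπ ▸ hu.map π)
  exact ((Commute.ofNat_left 2 y).isUnit_mul_iff.mp h2y).1

theorem isIndepSet_comap_iff {V W : Type*} {H : SimpleGraph W} {f : V → W} {A : Set V} :
    IsIndepSet (H.comap f) A ↔ IsIndepSet H (f '' A) := by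
  simp [IsIndepSet]

theorem isMaxIndepSet_comap_iff {V W : Type*} {H : SimpleGraph W} {f : V → W}
    (hf : Function.Surjective f) {A : Set V} :
    IsMaxIndepSet (H.comap f) A ↔ IsMaxIndepSet H (f '' A) ∧ f ⁻¹' (f '' A) = A := by
  have isIndepSet_preimage_iff {B : Set W} :
      IsIndepSet (H.comap f) (f ⁻¹' B) ↔ IsIndepSet H B := by
    rw [isIndepSet_comap_iff, Set.image_preimage_eq B hf]
  constructor
  · rintro ⟨hA, hmax⟩
    have hsat : f ⁻¹' (f '' A) = A := (hmax _ (isIndepSet_preimage_iff.mpr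
      (isIndepSet_comap_iff.mp hA)) (Set.subset_preimage_image f A)).symm
    refine ⟨⟨isIndepSet_comap_iff.mp hA, fun B hB hAB => ?_⟩, hsat⟩
    have : A = f ⁻¹' B :=
      hmax _ (isIndepSet_preimage_iff.mpr hB) (hsat ▸ Set.preimage_mono hAB)
    rw [this, Set.image_preimage_eq B hf]
  · rintro ⟨⟨hA, hmax⟩, hsat⟩
    refine ⟨isIndepSet_comap_iff.mpr hA, fun B hB hAB => hAB.antisymm ?_⟩
    have : f '' A = f '' B := hmax _ (isIndepSet_comap_iff.mp hB) (Set.image_mono hAB)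
    exact hsat ▸ this ▸ Set.subset_preimage_image f B

theorem preimage_image_eq_add_preimage_zero {G H F : Type*} [AddGroup G] [AddGroup H]
    [FunLike F G H] [AddMonoidHomClass F G H] (f : F) (A : Set G) :
    f ⁻¹' (f '' A) = A + f ⁻¹' {0} := by
  ext x
  simp only [Set.mem_preimage, Set.mem_image, Set.mem_add, Set.mem_singleton_iff]
  constructor
  · rintro ⟨a, ha, hax⟩
    refine ⟨a, ha, -a + x, ?_, add_neg_cancel_left a x⟩
    rw [map_add, map_neg, hax, neg_add_cancel]
  · rintro ⟨a, ha, k, hk, rfl⟩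
    exact ⟨a, ha, by rw [map_add, hk, add_zero]⟩

theorem stmt_0_general {R : Type*} [Ring R] (h2 : ¬ IsUnit (2 : R))
    {S : Type*} [Ring S] (π : R →+* S) (hsurj : Function.Surjective π)
    (hker : RingHom.ker π = Ideal.jacobson (⊥ : Ideal R)) (A : Set R) :
    IsMaxIndepSet (unitGraph R) A ↔
      IsMaxIndepSet (unitGraph S) (π '' A) ∧
        A = A + ((Ideal.jacobson (⊥ : Ideal R) : Ideal R) : Set R) := by
  have := π.isLocalHom_of_surjective_of_ker_le_jacobson_bot hsurj hker.le
  rw [unitGraph_eq_comap π h2, isMaxIndepSet_comap_iff hsurj,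
    preimage_image_eq_add_preimage_zero π, ← hker, RingHom.ker_eq, eq_comm]

theorem stmt_0 {R : Type*} [Ring R] [Finite R] (h2 : ¬ IsUnit (2 : R))
    {S : Type*} [Ring S] (π : R →+* S) (hsurj : Function.Surjective π)
    (hker : RingHom.ker π = Ideal.jacobson (⊥ : Ideal R)) (A : Set R) :
    IsMaxIndepSet (unitGraph R) A ↔
      IsMaxIndepSet (unitGraph S) (π '' A) ∧
        A = A + ((Ideal.jacobson (⊥ : Ideal R) : Ideal R) : Set R) :=
  stmt_0_general h2 π hsurj hker A
end

section
/- Let F be a finite field and n a positive integer. The set of all matrices in M_n(F) whose first row is zero is a maximal independent set of the unit graph of M_n(F), and its cardinality is |F|^(n^2 - n). -/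
open Pointwise

/-! The sum of two matrices with zero first row has zero first row, so it is singular and the set
is independent. It is maximal because a row `r` with a nonzero entry is the first row of an
invertible matrix `N` (the identity with one row replaced by `r`, then two rows swapped): if `X`
has first row `r`, then `N - X` lies in the set and `X + (N - X) = N` is a unit. The count is the
number of choices for the other `n - 1` rows. -/

theorem isMaxIndepSet_of_forall_exists_adj {V : Type*} {G : SimpleGraph V}
    {A : Set V} (hA : IsIndepSet G A) (hadj : ∀ x ∉ A, ∃ y ∈ A, G.Adj x y) :
    IsMaxIndepSet G A := by
  refine ⟨hA, fun B hB hAB => hAB.antisymm fun x hxB => ?_⟩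
  by_contra hxA
  obtain ⟨y, hyA, hxy⟩ := hadj x hxA
  exact hB hxB (hAB hyA) hxy

namespace Matrix

theorem ncard_setOf_row_eq_zero {m n R : Type*} [Fintype m] [Fintype n] [Zero R] [Fintype R]
    (i : m) :
    {M : Matrix m n R | ∀ j, M i j = 0}.ncard =
      Fintype.card R ^ (Fintype.card n * (Fintype.card m - 1)) := by
  classical
  have hcard := Fintype.card_filter_piFinset_const_eq_of_mem (Finset.univ : Finset (n → R)) i
    (Finset.mem_univ 0)
  rw [Fintype.piFinset_univ, Finset.card_univ, Fintype.card_fun, ← pow_mul] at hcard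
  rw [← hcard, ← Set.ncard_coe_finset]
  congr 1
  ext M
  simp [funext_iff]
  rfl

section UnitGraph

variable {m R : Type*} [Fintype m] [DecidableEq m]

theorem det_updateRow_one [CommRing R] (j : m) (r : m → R) :
    ((1 : Matrix m m R).updateRow j r).det = r j := by
  rw [← cramer_transpose_apply, transpose_one, cramer_one, Module.End.one_apply]

theorem exists_isUnit_row_eq [CommRing R] {r : m → R} {j : m} (hj : IsUnit (r j)) (i : m) :
    ∃ N : Matrix m m R, IsUnit N ∧ N i = r := by
  refine ⟨((1 : Matrix m m R).updateRow j r).submatrix (Equiv.swap i j) id, ?_, ?_⟩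
  · rw [isUnit_iff_isUnit_det, det_permute, det_updateRow_one]
    exact (Units.isUnit _).map (Int.castRingHom R) |>.mul hj
  · ext k
    simp

theorem isIndepSet_unitGraph_setOf_row_eq_zero [CommRing R] [Nontrivial R] (i : m) :
    IsIndepSet (unitGraph (Matrix m m R)) {M | ∀ j, M i j = 0} := by
  rintro X hX Y hY ⟨-, hunit⟩
  rw [isUnit_iff_isUnit_det, det_eq_zero_of_row_eq_zero i fun j => by simp [hX j, hY j]] at hunit
  exact not_isUnit_zero hunit

theorem exists_row_eq_zero_unitGraph_adj [CommRing R] [Nontrivial R] {X : Matrix m m R}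
    {i j : m} (hij : IsUnit (X i j)) :
    ∃ M : Matrix m m R, (∀ k, M i k = 0) ∧ (unitGraph _).Adj X M := by
  obtain ⟨N, hN, hNi⟩ := exists_isUnit_row_eq hij i
  have hrow : ∀ k, (N - X) i k = 0 := fun k => by simp [hNi]
  refine ⟨N - X, hrow, fun hXN => hij.ne_zero ?_, by rwa [add_sub_cancel]⟩
  rw [hXN, hrow]

theorem isMaxIndepSet_unitGraph_setOf_row_eq_zero [Field R] (i : m) :
    IsMaxIndepSet (unitGraph (Matrix m m R)) {M | ∀ j, M i j = 0} := by
  refine isMaxIndepSet_of_forall_exists_adj (isIndepSet_unitGraph_setOf_row_eq_zero i)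
    fun X hX => ?_
  obtain ⟨j, hj⟩ := not_forall.1 hX
  exact exists_row_eq_zero_unitGraph_adj (isUnit_iff_ne_zero.2 hj)

end UnitGraph

end Matrix

theorem stmt_5 {F : Type*} [Field F] [Fintype F] (n : ℕ) (hn : 0 < n) :
    IsMaxIndepSet (unitGraph (Matrix (Fin n) (Fin n) F))
      {M | ∀ j, M ⟨0, hn⟩ j = 0} ∧
      Set.ncard {M : Matrix (Fin n) (Fin n) F | ∀ j, M ⟨0, hn⟩ j = 0} =
        Fintype.card F ^ (n ^ 2 - n) := by
  refine ⟨Matrix.isMaxIndepSet_unitGraph_setOf_row_eq_zero _, ?_⟩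
  rw [Matrix.ncard_setOf_row_eq_zero, Fintype.card_fin, Nat.mul_sub, sq, mul_one]
end

section
/- Let F be a finite field of characteristic different from 2 and n a positive integer. Then the unit graph of M_n(F) is not well-covered. -/
/-!
The `±1` diagonal matrices form a maximal independent set of size `2 ^ n`: two distinct ones
sum to a diagonal matrix with a zero entry, and every matrix becomes invertible after adding a
suitable one, since by the Laplace expansion along the first row the two signs of the first entry
change the determinant by twice a minor that is nonzero by induction. For `v ≠ 0` the matrices
killing `v` form another maximal independent set: a sum of two of them kills `v`, and a matrix
`M` with `M *ᵥ v ≠ 0` is adjacent to `N - M` for an invertible `N` with `N *ᵥ v = M *ᵥ v`.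
That set is a subspace, so its size is a power of the odd number `|F|`, while `2 ^ n` is even.
-/

open Pointwise

open Matrix

theorem exists_linearEquiv_apply_eq_of_ne_zero {K V : Type*} [DivisionRing K] [AddCommGroup V]
    [Module K V] {v w : V} (hv : v ≠ 0) (hw : w ≠ 0) : ∃ g : V ≃ₗ[K] V, g v = w := by
  obtain ⟨g, hg⟩ := Submodule.exists_linearEquiv_restrict_eq
    ((LinearEquiv.toSpanNonzeroSingleton K V v hv).symm ≪≫ₗ
      LinearEquiv.toSpanNonzeroSingleton K V w hw)
  have hgv := hg (LinearEquiv.toSpanNonzeroSingleton K V v hv 1)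
  rw [LinearEquiv.trans_apply, LinearEquiv.symm_apply_apply] at hgv
  exact ⟨g, by simpa using hgv.symm⟩

theorem Matrix.exists_isUnit_mulVec_eq {K ι : Type*} [Field K] [Fintype ι] [DecidableEq ι]
    {v w : ι → K} (hv : v ≠ 0) (hw : w ≠ 0) :
    ∃ N : Matrix ι ι K, IsUnit N ∧ N *ᵥ v = w := by
  obtain ⟨g, hg⟩ := exists_linearEquiv_apply_eq_of_ne_zero (K := K) hv hw
  refine ⟨LinearMap.toMatrix' g, ?_, by rw [LinearMap.toMatrix'_mulVec]; exact hg⟩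
  rw [LinearMap.isUnit_toMatrix'_iff, Module.End.isUnit_iff]
  exact g.bijective

theorem Matrix.det_add_single_zero_zero {R : Type*} [CommRing R] {n : ℕ}
    (A : Matrix (Fin (n + 1)) (Fin (n + 1)) R) (x : R) :
    (A + single 0 0 x).det = A.det + x * (A.submatrix Fin.succ Fin.succ).det := by
  have minor_eq (f : Fin n → Fin (n + 1)) :
      (A + single 0 0 x).submatrix Fin.succ f = A.submatrix Fin.succ f := by
    ext i j; simp [(Fin.succ_ne_zero _).symm]
  rw [det_succ_row_zero, det_succ_row_zero A, Fin.sum_univ_succ, Fin.sum_univ_succ]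
  simp only [add_apply, single_apply_same, minor_eq, Fin.succAbove_zero,
    single_apply_of_col_ne _ _ (Fin.succ_ne_zero _).symm, add_zero, Fin.val_zero, pow_zero]
  ring

theorem Matrix.exists_sign_det_add_diagonal_ne_zero {K : Type*} [Field K] (h2 : (2 : K) ≠ 0)
    {n : ℕ} (M : Matrix (Fin n) (Fin n) K) :
    ∃ d ∈ Set.univ.pi fun _ => ({1, -1} : Set K), (M + diagonal d).det ≠ 0 := by
  induction n with
  | zero => exact ⟨0, by simp, by simp⟩
  | succ n ih =>
    obtain ⟨d, hd, hdet⟩ := ih (M.submatrix Fin.succ Fin.succ)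
    set N := M + diagonal (Fin.cons 0 d)
    have hdet_cons (x : K) : (M + diagonal (Fin.cons x d)).det =
        N.det + x * (M.submatrix Fin.succ Fin.succ + diagonal d).det := by
      have hcons : M + diagonal (Fin.cons x d) = N + single 0 0 x := by
        ext i j
        cases i using Fin.cases <;> cases j using Fin.cases <;>
          simp [N, (Fin.succ_ne_zero _).symm, diagonal_apply]
      have hminor : N.submatrix Fin.succ Fin.succ =
          M.submatrix Fin.succ Fin.succ + diagonal d := by
        ext i j; simp [N, diagonal_apply]
      rw [hcons, det_add_single_zero_zero, hminor]
    have hpm : (M + diagonal (Fin.cons 1 d)).det ≠ 0 ∨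
        (M + diagonal (Fin.cons (-1) d)).det ≠ 0 := by
      by_contra! h
      rw [hdet_cons 1, hdet_cons (-1)] at h
      exact mul_ne_zero h2 hdet (by linear_combination h.1 - h.2)
    have hmem (x : K) (hx : x ∈ ({1, -1} : Set K)) :
        (Fin.cons x d : Fin (n + 1) → K) ∈ Set.univ.pi fun _ => ({1, -1} : Set K) := by
      simp only [Set.mem_univ_pi, Fin.forall_fin_succ, Fin.cons_zero, Fin.cons_succ] at hd ⊢
      exact ⟨hx, hd⟩
    rcases hpm with h | h
    · exact ⟨_, hmem 1 (by simp), h⟩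
    · exact ⟨_, hmem (-1) (by simp), h⟩

theorem IsIndepSet.isMaxIndepSet_unitGraph {R : Type*} [Ring R] {A : Set R}
    (hA : IsIndepSet (unitGraph R) A) (hmax : ∀ x ∉ A, ∃ y ∈ A, IsUnit (x + y)) :
    IsMaxIndepSet (unitGraph R) A := by
  refine ⟨hA, fun B hB hAB => hAB.antisymm fun x hxB => ?_⟩
  by_contra hxA
  obtain ⟨y, hyA, hxy⟩ := hmax x hxA
  exact hB hxB (hAB hyA) ⟨fun h => hxA (h ▸ hyA), hxy⟩

def signDiagonals (K ι : Type*) [Field K] [DecidableEq ι] : Set (Matrix ι ι K) :=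
  diagonal '' Set.univ.pi fun _ => {1, -1}

section SignDiagonals

variable {K ι : Type*} [Field K] [Fintype ι] [DecidableEq ι]

theorem isIndepSet_signDiagonals :
    IsIndepSet (unitGraph (Matrix ι ι K)) (signDiagonals K ι) := by
  rintro _ ⟨d, hd, rfl⟩ _ ⟨e, he, rfl⟩ ⟨hne, hunit⟩
  obtain ⟨i, hi⟩ := Function.ne_iff.mp fun h : d = e => hne (h ▸ rfl)
  have hsum : d i + e i = 0 := by
    rcases hd i trivial with h | h <;> rcases he i trivial with h' | h' <;>
      simp_all
  rw [diagonal_add, isUnit_diagonal, Pi.isUnit_iff] at hunit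
  exact not_isUnit_zero (hsum ▸ hunit i)

theorem ncard_signDiagonals (h2 : (2 : K) ≠ 0) :
    (signDiagonals K ι).ncard = 2 ^ Fintype.card ι := by
  have hpair : ({1, -1} : Set K).encard = 2 :=
    Set.encard_pair fun h => h2 (by linear_combination h)
  rw [signDiagonals, Set.ncard_image_of_injective _ diagonal_injective, Set.ncard_def,
    Set.encard_pi_eq_prod_encard]
  simp [hpair]

end SignDiagonals

theorem isMaxIndepSet_signDiagonals {K : Type*} [Field K] (h2 : (2 : K) ≠ 0) (n : ℕ) :
    IsMaxIndepSet (unitGraph (Matrix (Fin n) (Fin n) K)) (signDiagonals K (Fin n)) := by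
  refine isIndepSet_signDiagonals.isMaxIndepSet_unitGraph fun M _ => ?_
  obtain ⟨d, hd, hdet⟩ := exists_sign_det_add_diagonal_ne_zero h2 M
  exact ⟨diagonal d, ⟨d, hd, rfl⟩, (isUnit_iff_isUnit_det _).mpr hdet.isUnit⟩

section Annihilator

variable {K ι : Type*} [Field K] [Fintype ι]

theorem isMaxIndepSet_setOf_mulVec_eq_zero [DecidableEq ι] {v : ι → K} (hv : v ≠ 0) :
    IsMaxIndepSet (unitGraph (Matrix ι ι K)) {M | M *ᵥ v = 0} := by
  have hindep : IsIndepSet (unitGraph (Matrix ι ι K)) {M | M *ᵥ v = 0} := by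
    intro x hx y hy ⟨_, hunit⟩
    apply hv
    apply mulVec_injective_iff_isUnit.mpr hunit
    change x *ᵥ v = 0 at hx
    change y *ᵥ v = 0 at hy
    rw [add_mulVec, hx, hy, mulVec_zero, add_zero]
  refine hindep.isMaxIndepSet_unitGraph fun M hM => ?_
  obtain ⟨N, hN, hNv⟩ := exists_isUnit_mulVec_eq hv hM
  exact ⟨N - M, by simp [sub_mulVec, hNv], by rwa [add_sub_cancel]⟩

theorem exists_ncard_setOf_mulVec_eq_zero_eq_pow [Finite K] (v : ι → K) :
    ∃ k, {M : Matrix ι ι K | M *ᵥ v = 0}.ncard = Nat.card K ^ k := by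
  refine ⟨Module.finrank K (LinearMap.ker
    ((mulVecBilin K K).flip v : Matrix ι ι K →ₗ[K] ι → K)), ?_⟩
  rw [← Module.natCard_eq_pow_finrank, ← Nat.card_coe_set_eq]
  rfl

end Annihilator

theorem stmt_6 {F : Type*} [Field F] [Fintype F] (hF : ringChar F ≠ 2)
    (n : ℕ) (hn : 0 < n) :
    ¬ WellCovered (unitGraph (Matrix (Fin n) (Fin n) F)) := by
  intro hW
  have h2 : (2 : F) ≠ 0 := Ring.two_ne_zero hF
  have : NeZero n := ⟨hn.ne'⟩
  obtain ⟨v, hv⟩ := exists_ne (0 : Fin n → F)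
  have hcard := hW _ _ (isMaxIndepSet_signDiagonals h2 n) (isMaxIndepSet_setOf_mulVec_eq_zero hv)
  obtain ⟨k, hk⟩ := exists_ncard_setOf_mulVec_eq_zero_eq_pow v
  rw [ncard_signDiagonals h2, Fintype.card_fin, hk] at hcard
  have h_even : Even (2 ^ n) := (Nat.even_pow' hn.ne').mpr even_two
  have h_odd : Odd (Nat.card F ^ k) := by
    rw [Nat.card_eq_fintype_card]
    exact (Nat.odd_iff.mpr (FiniteField.odd_card_of_char_ne_two hF)).pow
  exact Nat.not_even_iff_odd.mpr h_odd (hcard ▸ h_even)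
end

section
/- Let R and S be finite rings with identity and let M be a maximal independent set of the unit graph of R consisting entirely of non-units of R. Then M × S is a maximal independent set of the unit graph of R × S. -/
open Pointwise

/-!
Every `m ∈ M` is a non-unit, so `m + m = 2 * m` is a non-unit as well; hence no two points of
`M × S` (equal or not in the first coordinate) are adjacent. A point `(x, s)` outside `M × S` has
`x ∉ M`, so by maximality `x` is adjacent to some `m ∈ M`, and then `(x, s)` is adjacent to
`(m, 1 - s) ∈ M × S`.
-/

theorem isUnit_of_isUnit_add_self {R : Type*} [Semiring R] {m : R} (h : IsUnit (m + m)) :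
    IsUnit m := by
  rw [← two_mul, (Commute.ofNat_left 2 m).isUnit_mul_iff] at h
  exact h.2

section Graph

variable {V : Type*} {G : SimpleGraph V} {A : Set V}

theorem IsIndepSet.insert {x : V} (hA : IsIndepSet G A) (hx : ∀ a ∈ A, ¬ G.Adj a x) :
    IsIndepSet G (insert x A) := by
  rintro a (rfl | ha) b (rfl | hb) hab
  · exact G.loopless.irrefl _ hab
  · exact hx b hb hab.symm
  · exact hx a ha hab
  · exact hA ha hb hab

theorem isMaxIndepSet_iff :
    IsMaxIndepSet G A ↔ IsIndepSet G A ∧ ∀ x ∉ A, ∃ a ∈ A, G.Adj a x := by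
  refine ⟨fun hmax => ⟨hmax.1, fun x hxA => ?_⟩, fun ⟨hA, hdom⟩ => ⟨hA, fun B hB hAB => ?_⟩⟩
  · by_contra! hx
    have hAx : A = insert x A := hmax.2 _ (hmax.1.insert hx) (Set.subset_insert x A)
    exact hxA (hAx ▸ Set.mem_insert x A)
  · refine hAB.antisymm fun x hxB => ?_
    by_contra hxA
    obtain ⟨a, haA, hax⟩ := hdom x hxA
    exact hB (hAB haA) hxB hax

end Graph

section UnitGraph

variable {R S : Type*} [Ring R] [Ring S]

theorem unitGraph_prod_adj {p q : R × S} :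
    (unitGraph (R × S)).Adj p q ↔ p ≠ q ∧ IsUnit (p.1 + q.1) ∧ IsUnit (p.2 + q.2) := by
  simp only [unitGraph, Prod.isUnit_iff, Prod.fst_add, Prod.snd_add]

theorem IsIndepSet.prod_univ {M : Set R} (hM : IsIndepSet (unitGraph R) M)
    (hMnu : ∀ m ∈ M, ¬ IsUnit m) :
    IsIndepSet (unitGraph (R × S)) (M ×ˢ (Set.univ : Set S)) := by
  rintro ⟨x, s⟩ ⟨hxM, -⟩ ⟨y, t⟩ ⟨hyM, -⟩ hadj
  have hxy : IsUnit (x + y) := (unitGraph_prod_adj.1 hadj).2.1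
  obtain rfl | hne := eq_or_ne x y
  · exact hMnu x hxM (isUnit_of_isUnit_add_self hxy)
  · exact hM hxM hyM ⟨hne, hxy⟩

end UnitGraph

theorem stmt_7_general {R S : Type*} [Ring R] [Ring S]
    (M : Set R) (hM : IsMaxIndepSet (unitGraph R) M)
    (hMnu : ∀ m ∈ M, ¬ IsUnit m) :
    IsMaxIndepSet (unitGraph (R × S)) (M ×ˢ (Set.univ : Set S)) := by
  rw [isMaxIndepSet_iff] at hM ⊢
  refine ⟨hM.1.prod_univ hMnu, fun ⟨x, s⟩ hxs => ?_⟩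
  have hxM : x ∉ M := fun hxM => hxs ⟨hxM, Set.mem_univ s⟩
  obtain ⟨m, hmM, hmx, hunit⟩ := hM.2 x hxM
  refine ⟨(m, 1 - s), ⟨hmM, Set.mem_univ _⟩, unitGraph_prod_adj.2 ⟨?_, hunit, ?_⟩⟩
  · exact fun h => hmx (congrArg Prod.fst h)
  · simp

theorem stmt_7 {R S : Type*} [Ring R] [Ring S] [Finite R] [Finite S]
    (M : Set R) (hM : IsMaxIndepSet (unitGraph R) M)
    (hMnu : ∀ m ∈ M, ¬ IsUnit m) :
    IsMaxIndepSet (unitGraph (R × S)) (M ×ˢ (Set.univ : Set S)) :=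
  stmt_7_general M hM hMnu
end

section
/- Let R_1, ..., R_t be finite rings with identity such that 2 is a unit in each R_i, and for each i let M_i be a maximal independent set of the unit graph of R_i consisting entirely of units of R_i. Then M_1 × M_2 × ... × M_t is a maximal independent set of the unit graph of R_1 × ... × R_t. -/
open Pointwise

/-! A unit `m` of `M` is dominated by itself, since `m + m = 2 * m` is a unit; a non-member is
dominated by maximality. So every vertex of the product ring is dominated coordinatewise by a
point of `∏ M i`, and a sum in the product is a unit exactly when every coordinate is. -/

section IndepSet

variable {V : Type*} {G : SimpleGraph V} {A : Set V}

lemma IsMaxIndepSet.exists_adj (hA : IsMaxIndepSet G A) {z : V} (hz : z ∉ A) :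
    ∃ a ∈ A, G.Adj z a := by
  by_contra! hno
  have hindep : IsIndepSet G (insert z A) := by
    rintro x (rfl | hx) y (rfl | hy) hxy
    · exact G.loopless.irrefl _ hxy
    · exact hno y hy hxy
    · exact hno x hx hxy.symm
    · exact hA.1 hx hy hxy
  exact hz ((hA.2 _ hindep (Set.subset_insert z A)).symm ▸ Set.mem_insert z A)

lemma isMaxIndepSet_of_forall_exists_adj_s8 (hA : IsIndepSet G A)
    (hdom : ∀ z ∉ A, ∃ a ∈ A, G.Adj z a) : IsMaxIndepSet G A := by
  refine ⟨hA, fun B hB hAB => hAB.antisymm fun z hzB => ?_⟩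
  by_contra hzA
  obtain ⟨a, haA, hza⟩ := hdom z hzA
  exact hB hzB (hAB haA) hza

end IndepSet

section UnitGraph

variable {R : Type*} [Ring R] {M : Set R}

lemma IsMaxIndepSet.exists_mem_isUnit_add (h2 : IsUnit (2 : R))
    (hM : IsMaxIndepSet (unitGraph R) M) (hMu : ∀ m ∈ M, IsUnit m) (z : R) :
    ∃ m ∈ M, IsUnit (z + m) := by
  by_cases hz : z ∈ M
  · exact ⟨z, hz, two_mul z ▸ h2.mul (hMu z hz)⟩
  · obtain ⟨m, hm, -, hzm⟩ := hM.exists_adj hz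
    exact ⟨m, hm, hzm⟩

variable {ι : Type*} {R : ι → Type*} [∀ i, Ring (R i)]

lemma isIndepSet_unitGraph_pi {M : ∀ i, Set (R i)}
    (hM : ∀ i, IsIndepSet (unitGraph (R i)) (M i)) :
    IsIndepSet (unitGraph (∀ i, R i)) (Set.univ.pi M) := by
  rintro x hx y hy ⟨hxy, hu⟩
  obtain ⟨i, hi⟩ := Function.ne_iff.mp hxy
  exact hM i (hx i trivial) (hy i trivial) ⟨hi, Pi.isUnit_iff.mp hu i⟩

end UnitGraph

theorem stmt_8_general {t : ℕ} (R : Fin t → Type*) [∀ i, Ring (R i)]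
    (h2 : ∀ i, IsUnit (2 : R i)) (M : ∀ i, Set (R i))
    (hM : ∀ i, IsMaxIndepSet (unitGraph (R i)) (M i))
    (hMu : ∀ i, ∀ m ∈ M i, IsUnit m) :
    IsMaxIndepSet (unitGraph (∀ i, R i)) (Set.pi Set.univ M) := by
  refine isMaxIndepSet_of_forall_exists_adj_s8 (isIndepSet_unitGraph_pi fun i => (hM i).1)
    fun z hz => ?_
  choose m hmM hzm using fun i => (hM i).exists_mem_isUnit_add (h2 i) (hMu i) (z i)
  have hmem : m ∈ Set.univ.pi M := fun i _ => hmM i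
  exact ⟨m, hmem, fun h => hz (h ▸ hmem), Pi.isUnit_iff.mpr hzm⟩

theorem stmt_8 {t : ℕ} (R : Fin t → Type*) [∀ i, Ring (R i)] [∀ i, Finite (R i)]
    (h2 : ∀ i, IsUnit (2 : R i)) (M : ∀ i, Set (R i))
    (hM : ∀ i, IsMaxIndepSet (unitGraph (R i)) (M i))
    (hMu : ∀ i, ∀ m ∈ M i, IsUnit m) :
    IsMaxIndepSet (unitGraph (∀ i, R i)) (Set.pi Set.univ M) :=
  stmt_8_general R h2 M hM hMu
end

section
/- Let S be a finite semisimple ring and y a nonzero non-unit element of S. Then there exists a non-unit z in S such that y + z is a unit of S. -/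
open Pointwise

/-!
A finite ring with zero Jacobson radical is Artinian, hence semisimple. Right multiplication by
`y ≠ 0` is an `S`-linear endomorphism of `S` with kernel `≠ ⊤`, so some simple left ideal `V` meets
the kernel trivially and `V ≅ V * y`. In a semisimple module an isomorphism between a simple
submodule and another submodule extends to an automorphism (fix a complement if `V * y = V`,
otherwise swap `V` and `V * y` and fix a complement of `V ⊕ V * y`). Automorphisms of `S` are right
multiplications by units, giving a unit `u` and `v ≠ 0` with `v * u = v * y`; then `z = u - y`
is killed by `v`, so it is not a unit, while `y + z = u` is.
-/

namespace Submodule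

variable {R M : Type*} [Ring R] [AddCommGroup M] [Module R M]

theorem exists_linearEquiv_extend_of_isCompl {V P : Submodule R M} (h : IsCompl V P)
    (e : V ≃ₗ[R] V) : ∃ σ : M ≃ₗ[R] M, ∀ v : V, σ v = e v :=
  ⟨(prodEquivOfIsCompl V P h).symm ≪≫ₗ e.prodCongr (LinearEquiv.refl R P) ≪≫ₗ
      prodEquivOfIsCompl V P h, fun v => by simp⟩

theorem exists_linearEquiv_extend_of_disjoint {V W Q : Submodule R M} (hVW : Disjoint V W)
    (hQ : IsCompl (V ⊔ W) Q) (e : V ≃ₗ[R] W) : ∃ σ : M ≃ₗ[R] M, ∀ v : V, σ v = e v := by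
  have hV : IsCompl V (W ⊔ Q) := hVW.isCompl_sup_right_of_isCompl_sup_left hQ
  have hW : IsCompl W (V ⊔ Q) :=
    hVW.symm.isCompl_sup_right_of_isCompl_sup_left (sup_comm V W ▸ hQ)
  set π := projectionOnto V (W ⊔ Q) hV
  set ρ := projectionOnto W (V ⊔ Q) hW
  have hπV (v : V) : π v = v := projectionOnto_apply_left hV v
  have hρW (w : W) : ρ w = w := projectionOnto_apply_left hW w
  have hπW (w : W) : π w = 0 := projectionOnto_apply_of_mem_right hV (mem_sup_left w.2)
  have hρV (v : V) : ρ v = 0 := projectionOnto_apply_of_mem_right hW (mem_sup_left v.2)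
  let swap : M →ₗ[R] M := W.subtype ∘ₗ e ∘ₗ π + V.subtype ∘ₗ e.symm ∘ₗ ρ +
    (LinearMap.id - V.subtype ∘ₗ π - W.subtype ∘ₗ ρ)
  have swap_apply (x : M) : swap x = e (π x) + e.symm (ρ x) + (x - π x - ρ x) := rfl
  have hπ (x : M) : π (swap x) = e.symm (ρ x) := by simp [swap, hπV, hπW]
  have hρ (x : M) : ρ (swap x) = e (π x) := by simp [swap, hρV, hρW]
  refine ⟨.ofInvolutive swap fun x => ?_, fun v => ?_⟩
  · rw [swap_apply (swap x), hπ, hρ, swap_apply x, LinearEquiv.apply_symm_apply,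
      LinearEquiv.symm_apply_apply]
    abel
  · change swap v = e v
    simp [swap_apply, hπV, hρV]

theorem exists_linearEquiv_extend_of_isAtom [IsSemisimpleModule R M] {V W : Submodule R M}
    (hV : IsAtom V) (e : V ≃ₗ[R] W) : ∃ σ : M ≃ₗ[R] M, ∀ v : V, σ v = e v := by
  obtain rfl | hne := eq_or_ne V W
  · obtain ⟨P, hP⟩ := ComplementedLattice.exists_isCompl V
    exact exists_linearEquiv_extend_of_isCompl hP e
  · have : IsSimpleModule R V := isSimpleModule_iff_isAtom.mpr hV
    have hW : IsAtom W := isSimpleModule_iff_isAtom.mp (IsSimpleModule.congr e.symm)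
    obtain ⟨Q, hQ⟩ := ComplementedLattice.exists_isCompl (V ⊔ W)
    exact exists_linearEquiv_extend_of_disjoint (hV.disjoint_of_ne hW hne) hQ e

end Submodule

theorem map_eq_mul_map_one {R F : Type*} [Semiring R] [FunLike F R R] [LinearMapClass F R R R]
    (f : F) (x : R) : f x = x * f 1 := by
  rw [← smul_eq_mul, ← map_smul, smul_eq_mul, mul_one]

theorem LinearEquiv.isUnit_apply_one {R : Type*} [Semiring R] (σ : R ≃ₗ[R] R) :
    IsUnit (σ 1) :=
  ⟨⟨σ 1, σ.symm 1, by rw [← map_eq_mul_map_one, σ.symm_apply_apply],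
    by rw [← map_eq_mul_map_one, σ.apply_symm_apply]⟩, rfl⟩

theorem IsSemisimpleRing.exists_isUnit_mul_eq_mul {R : Type*} [Ring R] [IsSemisimpleRing R]
    {y : R} (hy : y ≠ 0) : ∃ u v : R, IsUnit u ∧ v ≠ 0 ∧ v * u = v * y := by
  let f := LinearMap.toSpanSingleton R R y
  have hker : LinearMap.ker f ≠ ⊤ := fun h => hy <| by
    simpa [f] using (h ▸ Submodule.mem_top : (1 : R) ∈ LinearMap.ker f)
  obtain ⟨V, hV, hVker⟩ : ∃ V : Submodule R R, IsAtom V ∧ ¬ V ≤ LinearMap.ker f := by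
    by_contra! h
    exact hker (eq_top_iff.mpr (sSup_atoms_eq_top (α := Submodule R R) ▸ sSup_le h))
  obtain ⟨σ, hσ⟩ := Submodule.exists_linearEquiv_extend_of_isAtom hV
    (LinearEquiv.ofInjective _
      (LinearMap.injective_domRestrict_iff.mpr (hV.not_le_iff_disjoint.mp hVker)))
  obtain ⟨v, hvV, hv⟩ := Submodule.exists_mem_ne_zero_of_ne_bot hV.ne_bot
  refine ⟨σ 1, v, σ.isUnit_apply_one, hv, ?_⟩
  rw [← map_eq_mul_map_one]
  simpa [f] using hσ ⟨v, hvV⟩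

theorem stmt_12_general {S : Type*} [Ring S] [Finite S]
    (hss : Ideal.jacobson (⊥ : Ideal S) = ⊥)
    (y : S) (hy0 : y ≠ 0) :
    ∃ z : S, ¬ IsUnit z ∧ IsUnit (y + z) := by
  have : IsSemisimpleRing S :=
    IsArtinianRing.isSemisimpleRing_iff_jacobson.mpr (Ideal.jacobson_bot (R := S) ▸ hss)
  obtain ⟨u, v, hu, hv, hvu⟩ := IsSemisimpleRing.exists_isUnit_mul_eq_mul hy0
  refine ⟨u - y, fun hz => hv ?_, by rwa [add_sub_cancel]⟩
  rwa [← hz.mul_left_eq_zero, mul_sub, sub_eq_zero]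

theorem stmt_12 {S : Type*} [Ring S] [Finite S]
    (hss : Ideal.jacobson (⊥ : Ideal S) = ⊥)
    (y : S) (hy0 : y ≠ 0) (hy : ¬ IsUnit y) :
    ∃ z : S, ¬ IsUnit z ∧ IsUnit (y + z) :=
  stmt_12_general hss y hy0
end

section
/- Let F be a finite field and Y a nonzero singular n-by-n matrix over F. Then there exists a singular n-by-n matrix Z over F such that Y + Z is invertible. -/
open Pointwise

/-!
Write `Y = P * diagonal d * Q` with `P`, `Q` products of transvections (hence invertible).
Since `Y ≠ 0`, some `d j ≠ 0`. Putting `1` exactly where `d` vanishes gives a diagonal `e` with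
`e j = 0`, so `diagonal e` is singular, while every entry of `d + e` is nonzero. Then
`Z = P * diagonal e * Q` is singular and `Y + Z = P * diagonal (d + e) * Q` is invertible.
-/

theorem exists_not_isUnit_add_isUnit_of_eq_mul_mul {R : Type*} [Semiring R] {y d p q e : R}
    (hp : IsUnit p) (hq : IsUnit q) (hy : y = p * d * q) (he : ¬ IsUnit e)
    (hde : IsUnit (d + e)) :
    ∃ z, ¬ IsUnit z ∧ IsUnit (y + z) := by
  obtain ⟨u, rfl⟩ := hp
  obtain ⟨v, rfl⟩ := hq
  refine ⟨u * e * v, ?_, ?_⟩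
  · rwa [Units.isUnit_mul_units, Units.isUnit_units_mul]
  · rw [hy, ← add_mul, ← mul_add]
    exact (u.isUnit.mul hde).mul v.isUnit

namespace Matrix

variable {ι K : Type*} [Fintype ι] [DecidableEq ι] [Field K]

theorem exists_not_isUnit_diagonal_add_isUnit {d : ι → K} (hd : d ≠ 0) :
    ∃ e : ι → K, ¬ IsUnit (diagonal e) ∧ IsUnit (diagonal d + diagonal e) := by
  classical
  obtain ⟨j, hj⟩ := Function.ne_iff.mp hd
  refine ⟨fun i => if d i = 0 then 1 else 0, ?_, ?_⟩
  · rw [isUnit_diagonal, Pi.isUnit_iff]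
    exact fun h => (h j).ne_zero (if_neg hj)
  · rw [diagonal_add, isUnit_diagonal, Pi.isUnit_iff]
    intro i
    by_cases hi : d i = 0 <;> simp [hi]

theorem isUnit_transvectionStruct_prod (L : List (TransvectionStruct ι K)) :
    IsUnit (L.map TransvectionStruct.toMatrix).prod := by
  rw [isUnit_iff_isUnit_det, TransvectionStruct.det_toMatrix_prod]
  exact isUnit_one

theorem exists_not_isUnit_add_isUnit {Y : Matrix ι ι K} (hY : Y ≠ 0) :
    ∃ Z : Matrix ι ι K, ¬ IsUnit Z ∧ IsUnit (Y + Z) := by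
  obtain ⟨L, L', d, rfl⟩ := Pivot.exists_list_transvec_mul_diagonal_mul_list_transvec Y
  have hd : d ≠ 0 := by
    rintro rfl
    simp at hY
  obtain ⟨e, he, hde⟩ := exists_not_isUnit_diagonal_add_isUnit hd
  exact exists_not_isUnit_add_isUnit_of_eq_mul_mul (isUnit_transvectionStruct_prod L)
    (isUnit_transvectionStruct_prod L') rfl he hde

end Matrix

theorem stmt_14_general {F : Type*} [Field F] {n : ℕ}
    (Y : Matrix (Fin n) (Fin n) F) (hY0 : Y ≠ 0) :
    ∃ Z : Matrix (Fin n) (Fin n) F, ¬ IsUnit Z ∧ IsUnit (Y + Z) :=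
  Matrix.exists_not_isUnit_add_isUnit hY0

theorem stmt_14 {F : Type*} [Field F] [Fintype F] {n : ℕ}
    (Y : Matrix (Fin n) (Fin n) F) (hY0 : Y ≠ 0) (hY : ¬ IsUnit Y) :
    ∃ Z : Matrix (Fin n) (Fin n) F, ¬ IsUnit Z ∧ IsUnit (Y + Z) :=
  stmt_14_general Y hY0
end
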